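/- arXiv:1509.02569 — 3 statements merged into one kernel-verified Lean document; each statement's English description precedes it below -/
import Mathlib

section
/- Let Δ ⊂ ℝⁿ be a nondegenerate simplex with vertices x₀,…,xₙ and barycenter b = (x₀+⋯+xₙ)/(n+1). If f : Δ → ℝ is convex, then f(b) ≤ (1/Vol(Δ)) ∫_Δ f(x) dx ≤ (f(x₀)+⋯+f(xₙ))/(n+1). -/
/-!
Permuting the vertices of the simplex `Δ` gives affine bijections of `Δ` onto itself; since they
map a set of finite positive measure onto itself, their determinants have absolute value one and
they preserve Lebesgue measure. Averaging over all `(n+1)!` of them, Jensen's inequality gives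
`(n+1)! f(b) ≤ ∑_σ f(σ y)` for `y ∈ Δ`, and integrating over `Δ` yields the left inequality.
For the right one, Jensen's inequality in barycentric coordinates gives `f y ≤ ∑ λᵢ(y) f(xᵢ)`,
and by symmetry every `λᵢ` has integral `Vol(Δ)/(n+1)`.
The same two pointwise inequalities bound `f` on `Δ`, and `f` is continuous on the interior of `Δ`,
whose boundary is null, so `f` is integrable.
-/

open MeasureTheory Set

theorem Equiv.Perm.card_smul_sum_apply {ι M : Type*} [Fintype ι] [DecidableEq ι]
    [AddCommMonoid M] (g : ι → M) (i : ι) :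
    Fintype.card ι • ∑ σ : Equiv.Perm ι, g (σ i) = (Fintype.card ι).factorial • ∑ j, g j := by
  have hindep (j : ι) : ∑ σ : Equiv.Perm ι, g (σ j) = ∑ σ : Equiv.Perm ι, g (σ i) := by
    rw [← Equiv.sum_comp (Equiv.mulRight (Equiv.swap i j))]
    simp
  calc Fintype.card ι • ∑ σ : Equiv.Perm ι, g (σ i)
      = ∑ j, ∑ σ : Equiv.Perm ι, g (σ j) := by simp [hindep]
    _ = ∑ σ : Equiv.Perm ι, ∑ j, g (σ j) := Finset.sum_comm
    _ = (Fintype.card ι).factorial • ∑ j, g j := by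
        simp [Equiv.sum_comp, Fintype.card_perm]

variable {E : Type*} [NormedAddCommGroup E] [NormedSpace ℝ E]

theorem AffineBasis.coord_nonneg_of_mem_convexHull {ι : Type*} {b : AffineBasis ι ℝ E} {y : E}
    (hy : y ∈ convexHull ℝ (range b)) (i : ι) : 0 ≤ b.coord i y := by
  rw [b.convexHull_eq_nonneg_coord] at hy
  exact hy i

namespace AffineBasis

variable {ι : Type*} [Fintype ι] (b : AffineBasis ι ℝ E)

noncomputable def permMap (σ : Equiv.Perm ι) : E →ᵃ[ℝ] E :=
  (Fintype.linearCombination ℝ (b ∘ σ)).toAffineMap.comp b.coords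

theorem permMap_apply (σ : Equiv.Perm ι) (y : E) :
    b.permMap σ y = ∑ i, b.coord i y • b (σ i) := by
  simp [permMap, Fintype.linearCombination_apply, AffineBasis.coords_apply]

theorem permMap_apply_self (σ : Equiv.Perm ι) (j : ι) : b.permMap σ (b j) = b (σ j) := by
  classical
  rw [permMap_apply, Finset.sum_eq_single j (fun i _ hij => by simp [b.coord_apply_ne hij])
    (by simp)]
  simp

theorem permMap_one_apply (y : E) : b.permMap 1 y = y := by
  simp [permMap_apply, b.linear_combination_coord_eq_self]

theorem permMap_inv_comp_permMap (σ : Equiv.Perm ι) :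
    (b.permMap σ⁻¹).comp (b.permMap σ) = AffineMap.id ℝ E :=
  AffineMap.ext_on b.tot <| by
    rintro - ⟨j, rfl⟩
    simp [permMap_apply_self]

theorem coord_comp_permMap (σ : Equiv.Perm ι) (i : ι) :
    (b.coord i).comp (b.permMap σ) = b.coord (σ⁻¹ i) :=
  AffineMap.ext_on b.tot <| by
    classical
    rintro - ⟨j, rfl⟩
    simp only [AffineMap.coe_comp, Function.comp_apply, permMap_apply_self, b.coord_apply,
      Equiv.Perm.inv_def, Equiv.eq_symm_apply, eq_comm]

theorem sum_permMap_smul [DecidableEq ι] (y : E) :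
    ∑ σ : Equiv.Perm ι, ((Fintype.card ι).factorial : ℝ)⁻¹ • b.permMap σ y =
      (Fintype.card ι : ℝ)⁻¹ • ∑ j, b j := by
  have hN : (Fintype.card ι : ℝ) ≠ 0 := by
    have := b.nonempty
    positivity
  have hcount (i : ι) : ((Fintype.card ι).factorial : ℝ)⁻¹ • ∑ σ : Equiv.Perm ι, b (σ i) =
      (Fintype.card ι : ℝ)⁻¹ • ∑ j, b j := by
    rw [inv_smul_eq_iff₀ (by positivity), smul_comm, eq_inv_smul_iff₀ hN, Nat.cast_smul_eq_nsmul,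
      Nat.cast_smul_eq_nsmul, Equiv.Perm.card_smul_sum_apply]
  calc ∑ σ : Equiv.Perm ι, ((Fintype.card ι).factorial : ℝ)⁻¹ • b.permMap σ y
      = ∑ i, b.coord i y • ((Fintype.card ι).factorial : ℝ)⁻¹ • ∑ σ : Equiv.Perm ι, b (σ i) := by
        simp_rw [permMap_apply, Finset.smul_sum]
        rw [Finset.sum_comm]
        simp_rw [smul_comm (b.coord _ y)]
    _ = (Fintype.card ι : ℝ)⁻¹ • ∑ j, b j := by
        simp_rw [hcount, ← Finset.sum_smul, b.sum_coord_apply_eq_one, one_smul]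

noncomputable def permEquiv (σ : Equiv.Perm ι) : E ≃ᵃ[ℝ] E :=
  AffineEquiv.ofBijective (φ := b.permMap σ)
    ⟨Function.LeftInverse.injective (g := b.permMap σ⁻¹)
      (AffineMap.congr_fun (b.permMap_inv_comp_permMap σ)),
     Function.RightInverse.surjective (g := b.permMap σ⁻¹)
      fun y => by simpa using AffineMap.congr_fun (b.permMap_inv_comp_permMap σ⁻¹) y⟩

@[simp]
theorem coe_permEquiv (σ : Equiv.Perm ι) : ⇑(b.permEquiv σ) = b.permMap σ := rfl

theorem image_permEquiv_convexHull (σ : Equiv.Perm ι) :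
    b.permEquiv σ '' convexHull ℝ (range b) = convexHull ℝ (range b) := by
  rw [coe_permEquiv, AffineMap.image_convexHull, ← range_comp,
    show b.permMap σ ∘ b = b ∘ σ from funext (b.permMap_apply_self σ), σ.surjective.range_comp]

variable {b}

theorem permMap_mem_convexHull (σ : Equiv.Perm ι) {y : E} (hy : y ∈ convexHull ℝ (range b)) :
    b.permMap σ y ∈ convexHull ℝ (range b) := by
  rw [← b.image_permEquiv_convexHull σ]
  exact ⟨y, hy, rfl⟩

end AffineBasis

namespace ConvexOn

variable {ι : Type*} [Fintype ι] {b : AffineBasis ι ℝ E} {f : E → ℝ} {y : E}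

theorem le_sum_coord_mul (hf : ConvexOn ℝ (convexHull ℝ (range b)) f)
    (hy : y ∈ convexHull ℝ (range b)) : f y ≤ ∑ i, b.coord i y * f (b i) := by
  have := hf.map_sum_le (t := Finset.univ) (fun i _ => b.coord_nonneg_of_mem_convexHull hy i)
    (b.sum_coord_apply_eq_one y) (fun i _ => subset_convexHull ℝ _ (mem_range_self i))
  simpa [b.linear_combination_coord_eq_self] using this

theorem map_centroid_le_sum_permMap [DecidableEq ι] (hf : ConvexOn ℝ (convexHull ℝ (range b)) f)
    (hy : y ∈ convexHull ℝ (range b)) :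
    f ((Fintype.card ι : ℝ)⁻¹ • ∑ j, b j) ≤
      ((Fintype.card ι).factorial : ℝ)⁻¹ * ∑ σ : Equiv.Perm ι, f (b.permMap σ y) := by
  have hw : ∑ _σ : Equiv.Perm ι, ((Fintype.card ι).factorial : ℝ)⁻¹ = 1 := by
    rw [Finset.sum_const, Finset.card_univ, Fintype.card_perm, nsmul_eq_mul,
      mul_inv_cancel₀ (by positivity)]
  have := hf.map_sum_le (t := Finset.univ) (fun _ _ => by positivity) hw
    (fun σ _ => AffineBasis.permMap_mem_convexHull σ hy)
  rwa [b.sum_permMap_smul, ← Finset.smul_sum, smul_eq_mul] at this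

theorem le_sum_abs (hf : ConvexOn ℝ (convexHull ℝ (range b)) f)
    (hy : y ∈ convexHull ℝ (range b)) : f y ≤ ∑ i, |f (b i)| := by
  obtain ⟨_, ⟨i, rfl⟩, hi⟩ := hf.exists_ge_of_mem_convexHull (subset_convexHull ℝ _) hy
  exact hi.trans <| (le_abs_self _).trans <|
    Finset.single_le_sum (fun j _ => abs_nonneg (f (b j))) (Finset.mem_univ i)

-- Only the term `σ = 1` of the averaged Jensen inequality is kept; the others are at most
-- `∑ i, |f (b i)|`.
theorem factorial_mul_map_centroid_sub_le [DecidableEq ι]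
    (hf : ConvexOn ℝ (convexHull ℝ (range b)) f) (hy : y ∈ convexHull ℝ (range b)) :
    ((Fintype.card ι).factorial : ℝ) * f ((Fintype.card ι : ℝ)⁻¹ • ∑ j, b j) -
      (((Fintype.card ι).factorial : ℝ) - 1) * ∑ i, |f (b i)| ≤ f y := by
  have hothers : ∑ σ ∈ Finset.univ.erase 1, f (b.permMap σ y) ≤
      (((Fintype.card ι).factorial : ℝ) - 1) * ∑ i, |f (b i)| := by
    calc ∑ σ ∈ Finset.univ.erase 1, f (b.permMap σ y)
        ≤ ∑ σ ∈ Finset.univ.erase (1 : Equiv.Perm ι), ∑ i, |f (b i)| :=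
          Finset.sum_le_sum fun σ _ => hf.le_sum_abs (AffineBasis.permMap_mem_convexHull σ hy)
      _ = _ := by
          rw [Finset.sum_erase_eq_sub (Finset.mem_univ _), Finset.sum_const, Finset.card_univ,
            Fintype.card_perm, nsmul_eq_mul, sub_one_mul]
  have hall := hf.map_centroid_le_sum_permMap hy
  rw [← Finset.add_sum_erase _ _ (Finset.mem_univ (1 : Equiv.Perm ι)), b.permMap_one_apply,
    le_inv_mul_iff₀ (by positivity)] at hall
  linarith

end ConvexOn

theorem AffineBasis.isCompact_convexHull {ι : Type*} [Finite ι] (b : AffineBasis ι ℝ E) :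
    IsCompact (convexHull ℝ (range b)) :=
  (finite_range b).isCompact_convexHull (𝕜 := ℝ)

section Measure

variable [MeasurableSpace E] {μ : Measure E} [μ.IsAddHaarMeasure]

theorem AffineBasis.addHaar_convexHull_pos {ι : Type*} [Fintype ι] (b : AffineBasis ι ℝ E) :
    0 < μ (convexHull ℝ (range b)) :=
  μ.measure_pos_of_nonempty_interior ⟨_, b.centroid_mem_interior_convexHull⟩

theorem AffineBasis.measureReal_convexHull_pos {ι : Type*} [Fintype ι] (b : AffineBasis ι ℝ E) :
    0 < μ.real (convexHull ℝ (range b)) :=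
  ENNReal.toReal_pos b.addHaar_convexHull_pos.ne' b.isCompact_convexHull.measure_lt_top.ne

variable [FiniteDimensional ℝ E] [BorelSpace E]

namespace AffineEquiv

theorem abs_det_linear_eq_one_of_image_eq (A : E ≃ᵃ[ℝ] E) {s : Set E} (hs : A '' s = s)
    (h₀ : μ s ≠ 0) (hfin : μ s ≠ ⊤) : |LinearMap.det (A.linear : E →ₗ[ℝ] E)| = 1 := by
  have himage : μ (A '' s) = ENNReal.ofReal |LinearMap.det (A.linear : E →ₗ[ℝ] E)| * μ s := by
    rw [← Measure.addHaar_image_linearMap, show ⇑A = fun y => A.linear y + A 0 from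
      A.toAffineMap.decomp, ← image_image (· + A 0), image_add_right, measure_preimage_add_right]
    rfl
  rwa [hs, eq_comm, ENNReal.mul_eq_right h₀ hfin, ENNReal.ofReal_eq_one] at himage

theorem measurePreserving_of_image_eq (A : E ≃ᵃ[ℝ] E) {s : Set E} (hs : A '' s = s)
    (h₀ : μ s ≠ 0) (hfin : μ s ≠ ⊤) : MeasurePreserving A μ μ := by
  have hdet := A.abs_det_linear_eq_one_of_image_eq hs h₀ hfin
  have hlin : MeasurePreserving (A.linear : E →ₗ[ℝ] E) μ μ := by
    refine ⟨A.linear.toLinearMap.continuous_of_finiteDimensional.measurable, ?_⟩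
    rw [Measure.map_linearMap_addHaar_eq_smul_addHaar μ (by rw [← abs_ne_zero, hdet]; norm_num),
      abs_inv, hdet]
    simp
  rw [show ⇑A = (· + A 0) ∘ A.linear from A.toAffineMap.decomp]
  exact (measurePreserving_add_right μ (A 0)).comp hlin

theorem measurableEmbedding (A : E ≃ᵃ[ℝ] E) : MeasurableEmbedding A :=
  A.toContinuousAffineEquiv.toHomeomorph.measurableEmbedding

theorem setIntegral_comp_of_image_eq (A : E ≃ᵃ[ℝ] E) {s : Set E} (hs : A '' s = s)
    (h₀ : μ s ≠ 0) (hfin : μ s ≠ ⊤) (g : E → ℝ) :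
    ∫ y in s, g (A y) ∂μ = ∫ y in s, g y ∂μ := by
  have := (A.measurePreserving_of_image_eq hs h₀ hfin).setIntegral_preimage_emb
    A.measurableEmbedding g s
  rwa [(Set.preimage_eq_iff_eq_image A.bijective).2 hs.symm] at this

theorem integrableOn_comp_of_image_eq (A : E ≃ᵃ[ℝ] E) {s : Set E} (hs : A '' s = s)
    (h₀ : μ s ≠ 0) (hfin : μ s ≠ ⊤) {g : E → ℝ} (hg : IntegrableOn g s μ) :
    IntegrableOn (fun y => g (A y)) s μ := by
  have := (A.measurePreserving_of_image_eq hs h₀ hfin).integrableOn_image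
    A.measurableEmbedding (f := g) (s := s)
  rw [hs] at this
  exact this.1 hg

end AffineEquiv

theorem ConvexOn.aestronglyMeasurable_restrict {s : Set E} {f : E → ℝ} (hf : ConvexOn ℝ s f) :
    AEStronglyMeasurable f (μ.restrict s) := by
  rw [← Measure.restrict_congr_set (interior_ae_eq_of_null_frontier (hf.1.addHaar_frontier μ))]
  exact hf.continuousOn_interior.aestronglyMeasurable measurableSet_interior

namespace AffineBasis

variable {ι : Type*} [Fintype ι] (b : AffineBasis ι ℝ E)

theorem setIntegral_comp_permMap (σ : Equiv.Perm ι) (g : E → ℝ) :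
    ∫ y in convexHull ℝ (range b), g (b.permMap σ y) ∂μ = ∫ y in convexHull ℝ (range b), g y ∂μ :=
  (b.permEquiv σ).setIntegral_comp_of_image_eq (b.image_permEquiv_convexHull σ)
    b.addHaar_convexHull_pos.ne' b.isCompact_convexHull.measure_lt_top.ne g

theorem integrableOn_comp_permMap (σ : Equiv.Perm ι) {g : E → ℝ}
    (hg : IntegrableOn g (convexHull ℝ (range b)) μ) :
    IntegrableOn (fun y => g (b.permMap σ y)) (convexHull ℝ (range b)) μ :=
  (b.permEquiv σ).integrableOn_comp_of_image_eq (b.image_permEquiv_convexHull σ)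
    b.addHaar_convexHull_pos.ne' b.isCompact_convexHull.measure_lt_top.ne hg

theorem integrableOn_coord (i : ι) : IntegrableOn (b.coord i) (convexHull ℝ (range b)) μ :=
  (b.coord i).continuous_of_finiteDimensional.continuousOn.integrableOn_compact
    b.isCompact_convexHull

theorem setIntegral_coord (i : ι) :
    ∫ y in convexHull ℝ (range b), b.coord i y ∂μ =
      μ.real (convexHull ℝ (range b)) / Fintype.card ι := by
  classical
  have hequal (j : ι) : ∫ y in convexHull ℝ (range b), b.coord j y ∂μ =
      ∫ y in convexHull ℝ (range b), b.coord i y ∂μ := by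
    rw [← b.setIntegral_comp_permMap (Equiv.swap i j) (b.coord j)]
    simp [← AffineMap.comp_apply, coord_comp_permMap]
  have hsum : ∑ j, ∫ y in convexHull ℝ (range b), b.coord j y ∂μ =
      μ.real (convexHull ℝ (range b)) := by
    rw [← integral_finsetSum _ fun j _ => b.integrableOn_coord j]
    simp [b.sum_coord_apply_eq_one]
  have hN : (Fintype.card ι : ℝ) ≠ 0 := by
    have := b.nonempty
    positivity
  simp only [hequal, Finset.sum_const, Finset.card_univ, nsmul_eq_mul] at hsum
  rw [eq_div_iff hN, ← hsum, mul_comm]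

end AffineBasis

namespace ConvexOn

variable {ι : Type*} [Fintype ι] {b : AffineBasis ι ℝ E} {f : E → ℝ}

theorem integrableOn_convexHull (hf : ConvexOn ℝ (convexHull ℝ (range b)) f) :
    IntegrableOn f (convexHull ℝ (range b)) μ := by
  classical
  set L := ((Fintype.card ι).factorial : ℝ) * f ((Fintype.card ι : ℝ)⁻¹ • ∑ j, b j) -
      (((Fintype.card ι).factorial : ℝ) - 1) * ∑ i, |f (b i)|
  refine .of_bound b.isCompact_convexHull.measure_lt_top hf.aestronglyMeasurable_restrict
    (∑ i, |f (b i)| + |L|) <| ae_restrict_of_forall_mem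
      b.isCompact_convexHull.isClosed.measurableSet fun y hy => ?_
  have hupper := hf.le_sum_abs hy
  have hlower : L ≤ f y := hf.factorial_mul_map_centroid_sub_le hy
  have hS : 0 ≤ ∑ i, |f (b i)| := Finset.sum_nonneg fun i _ => abs_nonneg _
  rw [Real.norm_eq_abs, abs_le]
  constructor <;> linarith [neg_abs_le L, abs_nonneg L]

theorem map_centroid_le_setAverage (hf : ConvexOn ℝ (convexHull ℝ (range b)) f) :
    f ((Fintype.card ι : ℝ)⁻¹ • ∑ j, b j) ≤ ⨍ y in convexHull ℝ (range b), f y ∂μ := by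
  classical
  have hf_int := hf.integrableOn_convexHull (μ := μ)
  have hsym_int : IntegrableOn (fun y => ((Fintype.card ι).factorial : ℝ)⁻¹ *
      ∑ σ : Equiv.Perm ι, f (b.permMap σ y)) (convexHull ℝ (range b)) μ :=
    (integrable_finsetSum _ fun σ _ => b.integrableOn_comp_permMap σ hf_int).const_mul _
  have hsym : ∫ y in convexHull ℝ (range b), ((Fintype.card ι).factorial : ℝ)⁻¹ *
      ∑ σ : Equiv.Perm ι, f (b.permMap σ y) ∂μ = ∫ y in convexHull ℝ (range b), f y ∂μ := by
    rw [integral_const_mul, integral_finsetSum _ fun σ _ => b.integrableOn_comp_permMap σ hf_int]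
    simp_rw [b.setIntegral_comp_permMap]
    rw [Finset.sum_const, Finset.card_univ, Fintype.card_perm, nsmul_eq_mul,
      inv_mul_cancel_left₀ (by positivity)]
  have hmono := setIntegral_mono_on (integrableOn_const b.isCompact_convexHull.measure_lt_top.ne)
    hsym_int b.isCompact_convexHull.isClosed.measurableSet
    fun y hy => hf.map_centroid_le_sum_permMap hy
  rw [setIntegral_const, hsym, smul_eq_mul] at hmono
  rwa [setAverage_eq, smul_eq_mul, le_inv_mul_iff₀ b.measureReal_convexHull_pos]

theorem setAverage_le_sum_div_card (hf : ConvexOn ℝ (convexHull ℝ (range b)) f) :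
    ⨍ y in convexHull ℝ (range b), f y ∂μ ≤ (∑ i, f (b i)) / Fintype.card ι := by
  have hterm_int (i : ι) : IntegrableOn (fun y => b.coord i y * f (b i))
      (convexHull ℝ (range b)) μ := (b.integrableOn_coord i).mul_const _
  have hmono := setIntegral_mono_on hf.integrableOn_convexHull
    (integrable_finsetSum _ fun i _ => hterm_int i) b.isCompact_convexHull.isClosed.measurableSet
    fun y hy => hf.le_sum_coord_mul hy
  rw [integral_finsetSum _ fun i _ => hterm_int i] at hmono
  simp_rw [integral_mul_const, b.setIntegral_coord] at hmono
  rw [setAverage_eq, smul_eq_mul, inv_mul_le_iff₀ b.measureReal_convexHull_pos, Finset.sum_div,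
    Finset.mul_sum]
  refine hmono.trans_eq (Finset.sum_congr rfl fun i _ => ?_)
  ring

end ConvexOn

end Measure

theorem hermite_hadamard_simplex (n : ℕ) (x : Fin (n + 1) → EuclideanSpace ℝ (Fin n))
    (hx : AffineIndependent ℝ x) (f : EuclideanSpace ℝ (Fin n) → ℝ)
    (hf : ConvexOn ℝ (convexHull ℝ (Set.range x)) f) :
    f (((n : ℝ) + 1)⁻¹ • ∑ i, x i) ≤ (⨍ y in convexHull ℝ (Set.range x), f y) ∧
      (⨍ y in convexHull ℝ (Set.range x), f y) ≤ (∑ i, f (x i)) / ((n : ℝ) + 1) := by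
  let b : AffineBasis (Fin (n + 1)) ℝ (EuclideanSpace ℝ (Fin n)) :=
    ⟨x, hx, hx.affineSpan_eq_top_iff_card_eq_finrank_add_one.2 (by simp)⟩
  have hcard : (Fintype.card (Fin (n + 1)) : ℝ) = n + 1 := by simp
  exact ⟨hcard ▸ hf.map_centroid_le_setAverage (b := b),
    hcard ▸ hf.setAverage_le_sum_div_card (b := b)⟩
end

section
/- The n-dimensional volume of a regular simplex in ℝⁿ with all edges of unit length equals (1/n!)·√((n+1)/2ⁿ). -/
/-!
Translating `x 0` to the origin, the simplex is the image of the corner simplex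
`{t | 0 ≤ t, ∑ tᵢ ≤ 1}`, of volume `1 / n!` (slice along the first coordinate), under the linear
map `T` sending the `i`-th basis vector to the edge `x (i + 1) - x 0`. Hence its volume is
`|det T| / n!`, and `(det T)²` is the Gram determinant of the edges. For unit edges the Gram
matrix is `(I + J) / 2`, with `J` the all-ones matrix, whose determinant is `(n + 1) / 2ⁿ`.
-/

open MeasureTheory Set Matrix
open scoped Nat Pointwise

def cornerSimplex (n : ℕ) (c : ℝ) : Set (Fin n → ℝ) :=
  {t | (∀ i, 0 ≤ t i) ∧ ∑ i, t i ≤ c}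

lemma measurableSet_cornerSimplex (n : ℕ) (c : ℝ) : MeasurableSet (cornerSimplex n c) :=
  measurableSet_setOfPred.2 (by fun_prop)

lemma cons_mem_cornerSimplex_iff {n : ℕ} {c a : ℝ} {t : Fin n → ℝ} :
    Fin.cons a t ∈ cornerSimplex (n + 1) c ↔ 0 ≤ a ∧ t ∈ cornerSimplex n (c - a) := by
  simp only [cornerSimplex, mem_ofPred_eq, Fin.forall_fin_succ, Fin.cons_zero, Fin.cons_succ,
    Fin.sum_cons, le_sub_iff_add_le', and_assoc]

lemma cornerSimplex_eq_empty {n : ℕ} {c : ℝ} (hc : c < 0) : cornerSimplex n c = ∅ :=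
  eq_empty_of_forall_notMem fun _ ⟨ht, hsum⟩ =>
    (Finset.sum_nonneg fun i _ => ht i).not_gt (hsum.trans_lt hc)

lemma volume_cornerSimplex_succ (n : ℕ) (c : ℝ) :
    volume (cornerSimplex (n + 1) c) = ∫⁻ a in Ici 0, volume (cornerSimplex n (c - a)) := by
  have hmp := (volume_preserving_piFinSuccAbove (fun _ : Fin (n + 1) => ℝ) 0).symm
  rw [← hmp.measure_preimage (measurableSet_cornerSimplex _ _).nullMeasurableSet,
    Measure.volume_eq_prod, Measure.prod_apply (hmp.measurable (measurableSet_cornerSimplex _ _)),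
    ← lintegral_indicator measurableSet_Ici]
  congr 1 with a
  have hslice : Prod.mk a ⁻¹' ((MeasurableEquiv.piFinSuccAbove (fun _ => ℝ) 0).symm ⁻¹'
      cornerSimplex (n + 1) c) = {t | Fin.cons a t ∈ cornerSimplex (n + 1) c} := by
    ext t
    simp only [mem_preimage, MeasurableEquiv.piFinSuccAbove_symm_apply, Fin.insertNthEquiv_zero]
    rfl
  rw [hslice]
  by_cases ha : 0 ≤ a <;> simp [ha, cons_mem_cornerSimplex_iff]

lemma setLIntegral_sub_pow_div_factorial (n : ℕ) {c : ℝ} (hc : 0 ≤ c) :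
    ∫⁻ a in Icc 0 c, ENNReal.ofReal ((c - a) ^ n / n !) =
      ENNReal.ofReal (c ^ (n + 1) / (n + 1)!) := by
  have hcont : Continuous fun a : ℝ => (c - a) ^ n / n ! := by fun_prop
  rw [← ofReal_integral_eq_lintegral_ofReal hcont.integrableOn_Icc
    ((ae_restrict_iff' measurableSet_Icc).2 (.of_forall fun a ha =>
      div_nonneg (pow_nonneg (sub_nonneg.2 ha.2) n) (by positivity))),
    integral_Icc_eq_integral_Ioc, ← intervalIntegral.integral_of_le hc,
    intervalIntegral.integral_div, intervalIntegral.integral_comp_sub_left (· ^ n) c]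
  simp [integral_pow, Nat.factorial_succ]
  field_simp

theorem volume_cornerSimplex (n : ℕ) {c : ℝ} (hc : 0 ≤ c) :
    volume (cornerSimplex n c) = ENNReal.ofReal (c ^ n / n !) := by
  induction n generalizing c with
  | zero => simp [cornerSimplex, hc, volume_pi]
  | succ n ih =>
    have hslice : EqOn (fun a => volume (cornerSimplex n (c - a)))
        ((Icc 0 c).indicator fun a => ENNReal.ofReal ((c - a) ^ n / n !)) (Ici 0) := by
      intro a ha
      by_cases hac : a ≤ c
      · simp [indicator_of_mem (show a ∈ Icc 0 c from ⟨ha, hac⟩), ih (sub_nonneg.2 hac)]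
      · simp [indicator_of_notMem (fun h : a ∈ Icc 0 c => hac h.2),
          cornerSimplex_eq_empty (sub_neg.2 (not_le.1 hac))]
    rw [volume_cornerSimplex_succ, setLIntegral_congr_fun measurableSet_Ici hslice,
      lintegral_indicator measurableSet_Icc, Measure.restrict_restrict measurableSet_Icc,
      inter_eq_left.2 Icc_subset_Ici_self, setLIntegral_sub_pow_div_factorial n hc]

lemma convexHull_range_eq_image_stdSimplex {𝕜 E ι : Type*} [Field 𝕜] [LinearOrder 𝕜]
    [IsStrictOrderedRing 𝕜] [AddCommGroup E] [Module 𝕜 E] [Fintype ι] (x : ι → E) :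
    convexHull 𝕜 (range x) = Fintype.linearCombination 𝕜 x '' stdSimplex 𝕜 ι := by
  classical
  rw [← convexHull_rangle_single_eq_stdSimplex, LinearMap.image_convexHull, ← range_comp]
  congr 2 with i
  simp [Fintype.linearCombination_apply_single]

lemma stdSimplex_fin_succ (n : ℕ) :
    stdSimplex ℝ (Fin (n + 1)) = (fun t => Fin.cons (1 - ∑ i, t i) t) '' cornerSimplex n 1 := by
  ext w
  constructor
  · rintro ⟨hw₀, hw₁⟩
    rw [Fin.sum_univ_succ] at hw₁
    refine ⟨Fin.tail w, ⟨fun i => hw₀ _, ?_⟩, ?_⟩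
    · change ∑ i : Fin n, w i.succ ≤ 1
      linarith [hw₀ 0]
    · ext i
      refine Fin.cases ?_ (fun i => rfl) i
      simp [Fin.tail, ← hw₁]
  · rintro ⟨t, ⟨ht₀, ht₁⟩, rfl⟩
    refine ⟨Fin.cases (by simpa using ht₁) ht₀, ?_⟩
    simp [Fin.sum_cons]

lemma convexHull_range_fin_succ {E : Type*} [AddCommGroup E] [Module ℝ E] {n : ℕ}
    (x : Fin (n + 1) → E) :
    convexHull ℝ (range x) =
      x 0 +ᵥ Fintype.linearCombination ℝ (fun i => x i.succ - x 0) '' cornerSimplex n 1 := by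
  rw [convexHull_range_eq_image_stdSimplex, stdSimplex_fin_succ, image_image, ← image_vadd,
    image_image]
  congr 1 with t
  simp only [Fintype.linearCombination_apply, Fin.sum_univ_succ, Fin.cons_zero, Fin.cons_succ,
    vadd_eq_add, smul_sub, sub_smul, one_smul, Finset.sum_smul, Finset.sum_sub_distrib]
  abel

lemma det_one_add_const {ι R : Type*} [Fintype ι] [DecidableEq ι] [CommRing R] (a : R) :
    (1 + of fun _ _ : ι => a).det = 1 + Fintype.card ι * a := by
  convert det_one_add_replicateCol_mul_replicateRow (ι := Unit) (fun _ : ι => a) 1 using 3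
  · ext i j; simp [Matrix.mul_apply]
  · simp [dotProduct]

section InnerProductSpace

variable {E : Type*} [NormedAddCommGroup E] [InnerProductSpace ℝ E]

lemma det_gram_eq_sq_det_constr {ι : Type*} [Fintype ι] [DecidableEq ι]
    (b : OrthonormalBasis ι ℝ E) (v : ι → E) :
    (gram ℝ v).det = (LinearMap.det (b.toBasis.constr ℝ v)) ^ 2 := by
  have hm : LinearMap.toMatrix b.toBasis b.toBasis (b.toBasis.constr ℝ v) =
      of fun i j => b.repr (v j) i := by
    ext i j
    simp [LinearMap.toMatrix_apply]
  rw [gram_eq_conjTranspose_mul b, det_mul, det_conjTranspose, ← LinearMap.det_toMatrix b.toBasis,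
    hm, star_trivial, sq]

theorem volume_convexHull_eq_sqrt_det_gram [FiniteDimensional ℝ E] [MeasurableSpace E]
    [BorelSpace E] {n : ℕ} (hE : Module.finrank ℝ E = n) (x : Fin (n + 1) → E) :
    volume (convexHull ℝ (range x)) =
      ENNReal.ofReal (√(gram ℝ fun i : Fin n => x i.succ - x 0).det / n !) := by
  subst hE
  set b := stdOrthonormalBasis ℝ E
  set v := fun i : Fin (Module.finrank ℝ E) => x i.succ - x 0
  set T := b.toBasis.constr ℝ v
  have hcoord : MeasurePreserving b.toBasis.equivFun :=
    (PiLp.volume_preserving_ofLp _).comp b.measurePreserving_repr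
  have himage : Fintype.linearCombination ℝ v '' cornerSimplex _ 1 =
      T '' (b.toBasis.equivFun ⁻¹' cornerSimplex _ 1) := by
    rw [← LinearEquiv.image_symm_eq_preimage, image_image]
    congr with t
    simp [T, Fintype.linearCombination_apply]
  rw [convexHull_range_fin_succ, measure_vadd, himage, Measure.addHaar_image_linearMap,
    hcoord.measure_preimage (measurableSet_cornerSimplex _ _).nullMeasurableSet,
    volume_cornerSimplex _ zero_le_one, det_gram_eq_sq_det_constr b, Real.sqrt_sq_eq_abs,
    ← ENNReal.ofReal_mul (abs_nonneg _), one_pow, mul_one_div]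

lemma gram_sub_eq_of_dist_eq_one {n : ℕ} {x : Fin (n + 1) → E}
    (h : ∀ i j, i ≠ j → dist (x i) (x j) = 1) :
    gram ℝ (fun i : Fin n => x i.succ - x 0) = (2⁻¹ : ℝ) • (1 + of fun _ _ => 1) := by
  have hnorm : ∀ i j, ‖x i - x j‖ = if i = j then 0 else 1 := fun i j => by
    split_ifs with hij
    · simp [hij]
    · rw [← dist_eq_norm, h i j hij]
  ext i j
  rw [gram_apply, real_inner_eq_norm_mul_self_add_norm_mul_self_sub_norm_sub_mul_self_div_two,
    sub_sub_sub_cancel_right, hnorm, hnorm, hnorm]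
  by_cases hij : i = j
  · norm_num [hij]
  · simp [hij, Fin.succ_ne_zero, one_apply]

lemma det_gram_sub_of_dist_eq_one {n : ℕ} {x : Fin (n + 1) → E}
    (h : ∀ i j, i ≠ j → dist (x i) (x j) = 1) :
    (gram ℝ fun i : Fin n => x i.succ - x 0).det = (n + 1) / 2 ^ n := by
  rw [gram_sub_eq_of_dist_eq_one h, det_smul, det_one_add_const]
  simp only [Fintype.card_fin, mul_one, inv_pow]
  ring

end InnerProductSpace

theorem volume_regular_simplex (n : ℕ) (x : Fin (n + 1) → EuclideanSpace ℝ (Fin n))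
    (h : ∀ i j, i ≠ j → dist (x i) (x j) = 1) :
    volume (convexHull ℝ (Set.range x)) =
      ENNReal.ofReal ((n.factorial : ℝ)⁻¹ * Real.sqrt (((n : ℝ) + 1) / 2 ^ n)) := by
  rw [volume_convexHull_eq_sqrt_det_gram finrank_euclideanSpace_fin x,
    det_gram_sub_of_dist_eq_one h, div_eq_inv_mul]
end

section
/- For a convex function f : [a,b] → ℝ with a < b, (1/(b-a)) ∫_a^b f(t) dt ≤ (1/2)[f((a+b)/2) + (f(a)+f(b))/2]. -/
open MeasureTheory Set

/-!
The reflection `t ↦ a + b - t` preserves `∫ t in a..b, f t`, and convexity gives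
`f t + f (a + b - t) ≤ f a + f b`; integrating yields the trapezoid bound
`∫ t in a..b, f t ≤ (b - a) * (f a + f b) / 2`. Applying it on both halves of `[a, b]` and
adding gives the refinement.
-/

namespace ConvexOn

variable {a b : ℝ} {f : ℝ → ℝ}

lemma add_apply_sub_le (hab : a ≤ b) (hf : ConvexOn ℝ (Icc a b) f) {t : ℝ}
    (ht : t ∈ Icc a b) : f t + f (a + b - t) ≤ f a + f b := by
  obtain ⟨p, q, hp, hq, hpq, rfl⟩ : t ∈ segment ℝ a b := (segment_eq_Icc hab).symm ▸ ht
  have ha : a ∈ Icc a b := left_mem_Icc.2 hab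
  have hb : b ∈ Icc a b := right_mem_Icc.2 hab
  have hreflect : a + b - (p • a + q • b) = q • a + p • b := by
    simp only [smul_eq_mul]
    linear_combination -(a + b) * hpq
  rw [hreflect]
  calc f (p • a + q • b) + f (q • a + p • b)
      ≤ (p • f a + q • f b) + (q • f a + p • f b) :=
        add_le_add (hf.2 ha hb hp hq hpq) (hf.2 ha hb hq hp (by linarith))
    _ = f a + f b := by
        simp only [smul_eq_mul]
        linear_combination (f a + f b) * hpq

lemma exists_forall_abs_le (hab : a ≤ b) (hf : ConvexOn ℝ (Icc a b) f) :
    ∃ C, ∀ t ∈ Icc a b, |f t| ≤ C := by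
  set M := max (f a) (f b)
  have hle : ∀ t ∈ Icc a b, f t ≤ M := fun t ht =>
    hf.le_max_of_mem_Icc (left_mem_Icc.2 hab) (right_mem_Icc.2 hab) ht
  have hge : ∀ t ∈ Icc a b, 2 * f ((a + b) / 2) - M ≤ f t := by
    intro t ht
    have hs : a + b - t ∈ Icc a b := ⟨by linarith [ht.2], by linarith [ht.1]⟩
    have hmid := hf.2 ht hs (by norm_num : (0 : ℝ) ≤ 1 / 2) (by norm_num : (0 : ℝ) ≤ 1 / 2)
      (by norm_num)
    have hm : (1 / 2 : ℝ) • t + (1 / 2 : ℝ) • (a + b - t) = (a + b) / 2 := by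
      simp only [smul_eq_mul]; ring
    rw [hm, smul_eq_mul, smul_eq_mul] at hmid
    linarith [hle _ hs]
  refine ⟨max M (M - 2 * f ((a + b) / 2)), fun t ht => abs_le.2 ⟨?_, ?_⟩⟩
  · linarith [le_max_right M (M - 2 * f ((a + b) / 2)), hge t ht]
  · exact (hle t ht).trans (le_max_left _ _)

lemma intervalIntegrable (hab : a ≤ b) (hf : ConvexOn ℝ (Icc a b) f) :
    IntervalIntegrable f volume a b := by
  obtain ⟨C, hC⟩ := hf.exists_forall_abs_le hab
  have hcont : ContinuousOn f (Ioo a b) := by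
    simpa only [interior_Icc] using hf.continuousOn_interior
  rw [intervalIntegrable_iff_integrableOn_Ioo_of_le hab]
  refine Integrable.of_bound (hcont.aestronglyMeasurable measurableSet_Ioo) C ?_
  filter_upwards [ae_restrict_mem measurableSet_Ioo] with t ht
  exact hC t (Ioo_subset_Icc_self ht)

theorem integral_le_trapezoid (hab : a ≤ b) (hf : ConvexOn ℝ (Icc a b) f) :
    ∫ t in a..b, f t ≤ (b - a) * (f a + f b) / 2 := by
  have hint := hf.intervalIntegrable hab
  have hint' : IntervalIntegrable (fun t => f (a + b - t)) volume a b := by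
    simpa using hint.symm.comp_sub_left (a + b)
  have hreflect : ∫ t in a..b, f (a + b - t) = ∫ t in a..b, f t := by
    simp [intervalIntegral.integral_comp_sub_left]
  have hsum := intervalIntegral.integral_mono_on hab (hint.add hint') intervalIntegrable_const
    fun t ht => hf.add_apply_sub_le hab ht
  rw [intervalIntegral.integral_add hint hint', hreflect, intervalIntegral.integral_const,
    smul_eq_mul] at hsum
  linarith

end ConvexOn

theorem hermite_hadamard_refined_interval (a b : ℝ) (hab : a < b) (f : ℝ → ℝ)
    (hf : ConvexOn ℝ (Set.Icc a b) f) :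
    (b - a)⁻¹ * (∫ t in a..b, f t) ≤
      (1 / 2) * (f ((a + b) / 2) + (f a + f b) / 2) := by
  have ham : a ≤ (a + b) / 2 := by linarith
  have hmb : (a + b) / 2 ≤ b := by linarith
  have hf₁ := hf.subset (Icc_subset_Icc le_rfl hmb) (convex_Icc _ _)
  have hf₂ := hf.subset (Icc_subset_Icc ham le_rfl) (convex_Icc _ _)
  rw [← intervalIntegral.integral_add_adjacent_intervals (hf₁.intervalIntegrable ham)
    (hf₂.intervalIntegrable hmb), inv_mul_le_iff₀ (sub_pos.2 hab)]
  linarith [hf₁.integral_le_trapezoid ham, hf₂.integral_le_trapezoid hmb]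
end
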